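/- arXiv:2102.13574 — 6 statements merged into one kernel-verified Lean document; each statement's English description precedes it below -/
import Mathlib

section
/- Every translation-invariant conditional nonlinear expectation on a local subset H of L^∞ is local: for all X ∈ H and A ∈ F_t, E_t(1_A X) = 1_A E_t(X). -/
open MeasureTheory

/-- Every translation-invariant conditional nonlinear expectation on a
local subset `H` of `L^∞` (containing the constants) is local:
`E (1_A • X) = 1_A • E X` for all `X ∈ H` and `A ∈ F_t`. -/
theorem translation_invariant_implies_local
    {Ω : Type*} {m : MeasurableSpace Ω} (mt : MeasurableSpace Ω) (hmt : mt ≤ m)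
    (H : Set (Ω → ℝ))
    (hbdd : ∀ f ∈ H, ∃ C : ℝ, ∀ ω, |f ω| ≤ C)
    (hconst : ∀ c : ℝ, (fun _ => c) ∈ H)
    (hlocalH : ∀ A : Set Ω, MeasurableSet[mt] A → ∀ f ∈ H, A.indicator f ∈ H)
    (htransH : ∀ f ∈ H, ∀ g ∈ H, Measurable[mt] g → f + g ∈ H)
    (E : (Ω → ℝ) → (Ω → ℝ))
    (hmap : ∀ f ∈ H, E f ∈ H ∧ Measurable[mt] (E f))
    (hmono : ∀ f ∈ H, ∀ g ∈ H, f ≤ g → E f ≤ E g)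
    (hpres : ∀ f ∈ H, Measurable[mt] f → E f = f)
    (htrans : ∀ f ∈ H, ∀ g ∈ H, Measurable[mt] g → E (f + g) = E f + g) :
    ∀ X ∈ H, ∀ A : Set Ω, MeasurableSet[mt] A →
      E (A.indicator X) = A.indicator (E X) := by
  -- Key claim: on B, E (1_B Z) agrees with E Z.
  have key : ∀ Z ∈ H, ∀ B : Set Ω, MeasurableSet[mt] B → ∀ ω ∈ B,
      E (B.indicator Z) ω = E Z ω := by
    intro Z hZ B hB ω hω
    obtain ⟨C, hC⟩ := hbdd Z hZ
    have hZB : B.indicator Z ∈ H := hlocalH B hB Z hZ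
    have hgmem : ∀ c : ℝ, (Bᶜ.indicator (fun _ => c) : Ω → ℝ) ∈ H :=
      fun c => hlocalH Bᶜ hB.compl _ (hconst c)
    have hgmeas : ∀ c : ℝ, Measurable[mt] (Bᶜ.indicator (fun _ => c) : Ω → ℝ) :=
      fun c => (@measurable_const ℝ Ω _ mt c).indicator hB.compl
    have hsum : ∀ c : ℝ, B.indicator Z + Bᶜ.indicator (fun _ => c) ∈ H :=
      fun c => htransH _ hZB _ (hgmem c) (hgmeas c)
    have h1 : Z ≤ B.indicator Z + Bᶜ.indicator (fun _ => C) := by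
      intro x
      by_cases hx : x ∈ B <;>
        simp [Set.indicator_apply, hx, Pi.add_apply]
      · exact (abs_le.mp (hC x)).2
    have h2 : B.indicator Z + Bᶜ.indicator (fun _ => (-C)) ≤ Z := by
      intro x
      by_cases hx : x ∈ B <;>
        simp [Set.indicator_apply, hx, Pi.add_apply]
      · exact (abs_le.mp (hC x)).1
    have hle1 : E Z ω ≤ E (B.indicator Z) ω := by
      have := hmono Z hZ _ (hsum C) h1 ω
      rw [htrans _ hZB _ (hgmem C) (hgmeas C)] at this
      simpa [Set.indicator_apply, hω] using this
    have hle2 : E (B.indicator Z) ω ≤ E Z ω := by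
      have := hmono _ (hsum (-C)) Z hZ h2 ω
      rw [htrans _ hZB _ (hgmem (-C)) (hgmeas (-C))] at this
      simpa [Set.indicator_apply, hω] using this
    exact le_antisymm hle2 hle1
  intro X hX A hA
  funext ω
  by_cases hω : ω ∈ A
  · rw [key X hX A hA ω hω, Set.indicator_of_mem hω]
  · have h0 : (Aᶜ.indicator (A.indicator X) : Ω → ℝ) = fun _ => (0 : ℝ) := by
      funext x
      by_cases hx : x ∈ A <;> simp [Set.indicator_apply, hx]
    have hXA : A.indicator X ∈ H := hlocalH A hA X hX
    have := key _ hXA Aᶜ hA.compl ω hω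
    rw [h0, hpres _ (hconst 0) (@measurable_const ℝ Ω _ mt 0)] at this
    rw [← this, Set.indicator_of_notMem hω]
end

section
/- Let (E_t) be a dynamic nonlinear expectation. The following are equivalent: (i) E is consistent; (ii) E_t = E_t ∘ E_{t+1} for all t < T; (iii) for all X, Y ∈ H and s ≤ t, E_t(X) ≤ E_t(Y) implies E_s(X) ≤ E_s(Y); (iv) for all X, Y ∈ H and s ≤ t, E_t(X) = E_t(Y) implies E_s(X) = E_s(Y). -/
open MeasureTheory

/-- For a dynamic nonlinear expectation `(E_t)` the following are
equivalent: (i) consistency `E_s = E_s ∘ E_t` for `s ≤ t ≤ T`; (ii) one-step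
consistency `E_t = E_t ∘ E_{t+1}` for `t < T`; (iii) for `s ≤ t ≤ T`,
`E_t X ≤ E_t Y` implies `E_s X ≤ E_s Y`; (iv) for `s ≤ t ≤ T`,
`E_t X = E_t Y` implies `E_s X = E_s Y`. -/
theorem consistency_equivalences
    {Ω : Type*} {m : MeasurableSpace Ω} (T : ℕ)
    (F : ℕ → MeasurableSpace Ω) (hF : Monotone F) (hFm : ∀ t, F t ≤ m)
    (hFT : F T = m)
    (H : Set (Ω → ℝ))
    (hconst : ∀ c : ℝ, (fun _ => c) ∈ H)
    (E : ℕ → (Ω → ℝ) → (Ω → ℝ))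
    (hmap : ∀ t, t ≤ T → ∀ f ∈ H, E t f ∈ H ∧ Measurable[F t] (E t f))
    (hmono : ∀ t, t ≤ T → ∀ f ∈ H, ∀ g ∈ H, f ≤ g → E t f ≤ E t g)
    (hpres : ∀ t, t ≤ T → ∀ f ∈ H, Measurable[F t] f → E t f = f) :
    ((∀ s t, s ≤ t → t ≤ T → ∀ X ∈ H, E s (E t X) = E s X) ↔
        (∀ t, t < T → ∀ X ∈ H, E t (E (t + 1) X) = E t X)) ∧
    ((∀ s t, s ≤ t → t ≤ T → ∀ X ∈ H, E s (E t X) = E s X) ↔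
        (∀ s t, s ≤ t → t ≤ T → ∀ X ∈ H, ∀ Y ∈ H,
          E t X ≤ E t Y → E s X ≤ E s Y)) ∧
    ((∀ s t, s ≤ t → t ≤ T → ∀ X ∈ H, E s (E t X) = E s X) ↔
        (∀ s t, s ≤ t → t ≤ T → ∀ X ∈ H, ∀ Y ∈ H,
          E t X = E t Y → E s X = E s Y)) := by
  -- E_t(E_t X) = E_t X
  have hidem : ∀ t, t ≤ T → ∀ X ∈ H, E t (E t X) = E t X := by
    intro t ht X hX
    exact hpres t ht _ (hmap t ht X hX).1 (hmap t ht X hX).2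
  -- (i) ↔ (ii)
  have h12 : (∀ s t, s ≤ t → t ≤ T → ∀ X ∈ H, E s (E t X) = E s X) ↔
      (∀ t, t < T → ∀ X ∈ H, E t (E (t + 1) X) = E t X) := by
    constructor
    · intro h t ht X hX
      exact h t (t + 1) (Nat.le_succ t) ht X hX
    · intro h s t hst
      induction t, hst using Nat.le_induction with
      | base => exact fun hsT X hX => hidem s hsT X hX
      | succ t hst ih =>
        intro htT X hX
        have htT' : t ≤ T := le_trans (Nat.le_succ t) htT
        have htlt : t < T := htT
        have h1 : E s (E (t + 1) X) = E s (E t (E (t + 1) X)) :=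
          (ih htT' _ (hmap (t + 1) htT X hX).1).symm
        rw [h1, h t htlt X hX]
        exact ih htT' X hX
  -- (i) → (iii)
  have h13 : (∀ s t, s ≤ t → t ≤ T → ∀ X ∈ H, E s (E t X) = E s X) →
      (∀ s t, s ≤ t → t ≤ T → ∀ X ∈ H, ∀ Y ∈ H,
        E t X ≤ E t Y → E s X ≤ E s Y) := by
    intro h s t hst htT X hX Y hY hle
    have hsT : s ≤ T := le_trans hst htT
    have := hmono s hsT _ (hmap t htT X hX).1 _ (hmap t htT Y hY).1 hle
    rwa [h s t hst htT X hX, h s t hst htT Y hY] at this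
  -- (iii) → (i)
  have h31 : (∀ s t, s ≤ t → t ≤ T → ∀ X ∈ H, ∀ Y ∈ H,
        E t X ≤ E t Y → E s X ≤ E s Y) →
      (∀ s t, s ≤ t → t ≤ T → ∀ X ∈ H, E s (E t X) = E s X) := by
    intro h s t hst htT X hX
    have hEX : E t X ∈ H := (hmap t htT X hX).1
    have heq : E t (E t X) = E t X := hidem t htT X hX
    exact le_antisymm (h s t hst htT _ hEX X hX (le_of_eq heq))
      (h s t hst htT X hX _ hEX (le_of_eq heq.symm))
  -- (iv) → (i)
  have h41 : (∀ s t, s ≤ t → t ≤ T → ∀ X ∈ H, ∀ Y ∈ H,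
        E t X = E t Y → E s X = E s Y) →
      (∀ s t, s ≤ t → t ≤ T → ∀ X ∈ H, E s (E t X) = E s X) := by
    intro h s t hst htT X hX
    exact h s t hst htT _ (hmap t htT X hX).1 X hX (hidem t htT X hX)
  refine ⟨h12, ⟨h13, h31⟩, ?_, h41⟩
  intro h s t hst htT X hX Y hY heq
  exact le_antisymm (h13 h s t hst htT X hX Y hY (le_of_eq heq))
    (h13 h s t hst htT Y hY X hX (le_of_eq heq.symm))
end

section
/- If E is a consistent, local dynamic nonlinear expectation, t ∈ {0,...,T}, H ∈ 𝓗 and E_t(H) ≤ 0, then E_s(1_A H) ≤ 0 for all A ∈ F_t and all s ≤ t. If moreover E_0 is sensitive, the converse holds: E_s(1_A H) ≤ 0 for all A ∈ F_t (for some s ≤ t) implies E_t(H) ≤ 0. -/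
open MeasureTheory

/-- For a consistent, local dynamic nonlinear expectation `E`, if
`E_t(H) ≤ 0` then `E_s(1_A H) ≤ 0` for all `A ∈ F_t` and all `s ≤ t`; and if
moreover `E_0` is sensitive, the converse holds. -/
theorem acceptance_sets_consistent
    {Ω : Type*} {m : MeasurableSpace Ω} (T : ℕ)
    (F : ℕ → MeasurableSpace Ω) (hF : Monotone F) (hFm : ∀ t, F t ≤ m)
    (hFT : F T = m)
    (H : Set (Ω → ℝ))
    (hconst : ∀ c : ℝ, (fun _ => c) ∈ H)
    (E : ℕ → (Ω → ℝ) → (Ω → ℝ))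
    (hmap : ∀ t, t ≤ T → ∀ f ∈ H, E t f ∈ H ∧ Measurable[F t] (E t f))
    (hmono : ∀ t, t ≤ T → ∀ f ∈ H, ∀ g ∈ H, f ≤ g → E t f ≤ E t g)
    (hpres : ∀ t, t ≤ T → ∀ f ∈ H, Measurable[F t] f → E t f = f)
    (hlocalH : ∀ t, t ≤ T → ∀ A : Set Ω, MeasurableSet[F t] A → ∀ f ∈ H,
      A.indicator f ∈ H)
    (hlocalE : ∀ t, t ≤ T → ∀ A : Set Ω, MeasurableSet[F t] A → ∀ f ∈ H,
      E t (A.indicator f) = A.indicator (E t f))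
    (hcons : ∀ s t, s ≤ t → t ≤ T → ∀ X ∈ H, E s (E t X) = E s X)
    (t : ℕ) (ht : t ≤ T) (X : Ω → ℝ) (hX : X ∈ H) :
    (E t X ≤ 0 → ∀ s, s ≤ t → ∀ A : Set Ω, MeasurableSet[F t] A →
      E s (A.indicator X) ≤ 0) ∧
    ((∀ Y ∈ H, 0 ≤ Y → E 0 Y = 0 → Y = 0) →
      ∀ s, s ≤ t → (∀ A : Set Ω, MeasurableSet[F t] A → E s (A.indicator X) ≤ 0) →
        E t X ≤ 0) := by
  have hEtX : E t X ∈ H := (hmap t ht X hX).1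
  have hzero : ∀ s, s ≤ T → E s (fun _ => (0:ℝ)) = fun _ => 0 := fun s hs =>
    hpres s hs _ (hconst 0) measurable_const
  constructor
  · intro hEt s hs A hA
    have hXA : A.indicator X ∈ H := hlocalH t ht A hA X hX
    have hindH : A.indicator (E t X) ∈ H := hlocalH t ht A hA _ hEtX
    have h1 : E s (A.indicator X) = E s (A.indicator (E t X)) := by
      rw [← hcons s t hs ht _ hXA, hlocalE t ht A hA X hX]
    have hle : A.indicator (E t X) ≤ (fun _ => (0:ℝ)) := by
      intro ω
      by_cases hω : ω ∈ A
      · simpa [Set.indicator_of_mem hω] using hEt ω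
      · simp [Set.indicator_of_notMem hω]
    have := hmono s (hs.trans ht) _ hindH _ (hconst 0) hle
    rw [hzero s (hs.trans ht)] at this
    intro ω
    rw [h1]
    exact this ω
  · intro hsens s hs hall
    set A : Set Ω := {ω | 0 < E t X ω} with hAdef
    have hA : MeasurableSet[F t] A := by
      have : A = E t X ⁻¹' Set.Ioi 0 := rfl
      rw [this]
      exact (hmap t ht X hX).2 measurableSet_Ioi
    set Y : Ω → ℝ := A.indicator (E t X) with hYdef
    have hY : Y ∈ H := hlocalH t ht A hA _ hEtX
    have hYnn : (0 : Ω → ℝ) ≤ Y := by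
      intro ω
      by_cases hω : ω ∈ A
      · simpa [hYdef, Set.indicator_of_mem hω] using le_of_lt hω
      · simp [hYdef, Set.indicator_of_notMem hω]
    have hXA : A.indicator X ∈ H := hlocalH t ht A hA X hX
    have h1 : E s (A.indicator X) = E s Y := by
      rw [← hcons s t hs ht _ hXA, hlocalE t ht A hA X hX]
    have hEsY : E s Y ≤ (fun _ => (0:ℝ)) := by
      intro ω; rw [← h1]; exact hall A hA ω
    have hEsYH : E s Y ∈ H := (hmap s (hs.trans ht) Y hY).1
    have hle0 : E 0 Y ≤ fun _ => (0:ℝ) := by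
      have := hmono 0 (Nat.zero_le T) _ hEsYH _ (hconst 0) hEsY
      rwa [hcons 0 s (Nat.zero_le s) (hs.trans ht) Y hY, hzero 0 (Nat.zero_le T)] at this
    have hge0 : (fun _ => (0:ℝ)) ≤ E 0 Y := by
      have := hmono 0 (Nat.zero_le T) _ (hconst 0) _ hY hYnn
      rwa [hzero 0 (Nat.zero_le T)] at this
    have hY0 : Y = 0 := hsens Y hY hYnn (le_antisymm hle0 hge0)
    intro ω
    by_contra hpos
    push_neg at hpos
    have hωA : ω ∈ A := hpos
    have h2 : Y ω = E t X ω := Set.indicator_of_mem hωA _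
    rw [hY0] at h2
    exact absurd (h2 ▸ hpos) (lt_irrefl _)
end

section
/- Every sensitive F_0-conditional nonlinear expectation E_0 on a symmetric space H has at most one translation-invariant, local, consistent extension (E_t)_t; if it exists, it is given by E_t(H) = essinf { H_t ∈ H_t : H − H_t ∈ A_t }, where A_t := { H ∈ H : E_0(1_A H) ≤ 0 for all A ∈ F_t }. -/
open MeasureTheory

/-- Every sensitive `F_0`-conditional nonlinear expectation `E0` on a
symmetric space `H` has at most one translation-invariant, local, consistent
extension `(E_t)_t`: any two such extensions `E, E'` coincide, and the extension is
given by the formula `E_t(X) = essinf { H_t ∈ H_t : X - H_t ∈ A_t }` where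
`A_t = { Y ∈ H : E0(1_A Y) ≤ 0 for all A ∈ F_t }` (the infimum being a greatest
lower bound for the order on random variables). -/
theorem sensitive_expectation_unique_consistent_extension
    {Ω : Type*} {m : MeasurableSpace Ω} (T : ℕ)
    (F : ℕ → MeasurableSpace Ω) (hF : Monotone F) (hFm : ∀ t, F t ≤ m)
    (hFT : F T = m)
    (H : Set (Ω → ℝ))
    (hconst : ∀ c : ℝ, (fun _ => c) ∈ H)
    (hsymm : ∀ f ∈ H, -f ∈ H)
    (hlocalH : ∀ t, t ≤ T → ∀ A : Set Ω, MeasurableSet[F t] A → ∀ f ∈ H,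
      A.indicator f ∈ H)
    (htransH : ∀ t, t ≤ T → ∀ f ∈ H, ∀ g ∈ H, Measurable[F t] g → f + g ∈ H)
    (E0 : (Ω → ℝ) → (Ω → ℝ))
    (hsens0 : ∀ X ∈ H, 0 ≤ X → E0 X = 0 → X = 0)
    (E E' : ℕ → (Ω → ℝ) → (Ω → ℝ))
    -- `E` is a translation-invariant, local, consistent extension of `E0`
    (hmap : ∀ t, t ≤ T → ∀ f ∈ H, E t f ∈ H ∧ Measurable[F t] (E t f))
    (hmono : ∀ t, t ≤ T → ∀ f ∈ H, ∀ g ∈ H, f ≤ g → E t f ≤ E t g)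
    (hpres : ∀ t, t ≤ T → ∀ f ∈ H, Measurable[F t] f → E t f = f)
    (htrans : ∀ t, t ≤ T → ∀ f ∈ H, ∀ g ∈ H, Measurable[F t] g →
      E t (f + g) = E t f + g)
    (hlocal : ∀ t, t ≤ T → ∀ A : Set Ω, MeasurableSet[F t] A → ∀ f ∈ H,
      E t (A.indicator f) = A.indicator (E t f))
    (hcons : ∀ s t, s ≤ t → t ≤ T → ∀ X ∈ H, E s (E t X) = E s X)
    (hE0 : E 0 = E0)
    -- `E'` is a translation-invariant, local, consistent extension of `E0`
    (hmap' : ∀ t, t ≤ T → ∀ f ∈ H, E' t f ∈ H ∧ Measurable[F t] (E' t f))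
    (hmono' : ∀ t, t ≤ T → ∀ f ∈ H, ∀ g ∈ H, f ≤ g → E' t f ≤ E' t g)
    (hpres' : ∀ t, t ≤ T → ∀ f ∈ H, Measurable[F t] f → E' t f = f)
    (htrans' : ∀ t, t ≤ T → ∀ f ∈ H, ∀ g ∈ H, Measurable[F t] g →
      E' t (f + g) = E' t f + g)
    (hlocal' : ∀ t, t ≤ T → ∀ A : Set Ω, MeasurableSet[F t] A → ∀ f ∈ H,
      E' t (A.indicator f) = A.indicator (E' t f))
    (hcons' : ∀ s t, s ≤ t → t ≤ T → ∀ X ∈ H, E' s (E' t X) = E' s X)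
    (hE'0 : E' 0 = E0) :
    (∀ t, t ≤ T → ∀ f ∈ H, E t f = E' t f) ∧
    (∀ t, t ≤ T → ∀ f ∈ H,
      IsGLB {g : Ω → ℝ | g ∈ H ∧ Measurable[F t] g ∧ (f - g) ∈ H ∧
        ∀ A : Set Ω, MeasurableSet[F t] A → E0 (A.indicator (f - g)) ≤ 0}
        (E t f)) := by
  have h0T : (0 : ℕ) ≤ T := Nat.zero_le T
  have h0H : (0 : Ω → ℝ) ∈ H := hconst 0
  have hE00 : E0 (0 : Ω → ℝ) = 0 := by
    rw [← hE0]
    exact hpres 0 h0T 0 h0H measurable_const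
  have subMem : ∀ t, t ≤ T → ∀ f ∈ H, ∀ g ∈ H, Measurable[F t] g → f - g ∈ H := by
    intro t ht f hf g hg hgm
    rw [sub_eq_add_neg]
    exact htransH t ht f hf (-g) (hsymm g hg) hgm.neg
  -- A general lemma about any extension G satisfying the axioms
  have main : ∀ (G : ℕ → (Ω → ℝ) → (Ω → ℝ)),
      (∀ t, t ≤ T → ∀ f ∈ H, G t f ∈ H ∧ Measurable[F t] (G t f)) →
      (∀ t, t ≤ T → ∀ f ∈ H, ∀ g ∈ H, f ≤ g → G t f ≤ G t g) →
      (∀ t, t ≤ T → ∀ f ∈ H, Measurable[F t] f → G t f = f) →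
      (∀ t, t ≤ T → ∀ f ∈ H, ∀ g ∈ H, Measurable[F t] g → G t (f + g) = G t f + g) →
      (∀ t, t ≤ T → ∀ A : Set Ω, MeasurableSet[F t] A → ∀ f ∈ H,
        G t (A.indicator f) = A.indicator (G t f)) →
      (∀ s t, s ≤ t → t ≤ T → ∀ X ∈ H, G s (G t X) = G s X) →
      (G 0 = E0) →
      (∀ t, t ≤ T → ∀ f ∈ H, ∀ g ∈ H, Measurable[F t] g → ∀ A : Set Ω,
          MeasurableSet[F t] A →
          E0 (A.indicator (f - g)) = E0 (A.indicator (G t f - g))) ∧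
      (∀ t, t ≤ T → ∀ f ∈ H, ∀ g ∈ H, Measurable[F t] g →
          (∀ A : Set Ω, MeasurableSet[F t] A → E0 (A.indicator (f - g)) ≤ 0) →
          G t f ≤ g) := by
    intro G hmapG hmonoG hpresG htransG hlocalG hconsG hG0
    have hGsub : ∀ t, t ≤ T → ∀ f ∈ H, ∀ g ∈ H, Measurable[F t] g →
        G t (f - g) = G t f - g := by
      intro t ht f hf g hg hgm
      rw [sub_eq_add_neg, htransG t ht f hf (-g) (hsymm g hg) hgm.neg,
        ← sub_eq_add_neg]
    have heq : ∀ t, t ≤ T → ∀ f ∈ H, ∀ g ∈ H, Measurable[F t] g → ∀ A : Set Ω,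
        MeasurableSet[F t] A →
        E0 (A.indicator (f - g)) = E0 (A.indicator (G t f - g)) := by
      intro t ht f hf g hg hgm A hA
      have hfg : f - g ∈ H := subMem t ht f hf g hg hgm
      have hY : A.indicator (f - g) ∈ H := hlocalH t ht A hA _ hfg
      have h1 : G 0 (A.indicator (f - g)) = G 0 (G t (A.indicator (f - g))) :=
        (hconsG 0 t (Nat.zero_le t) ht _ hY).symm
      have h2 : G t (A.indicator (f - g)) = A.indicator (G t f - g) := by
        rw [hlocalG t ht A hA _ hfg, hGsub t ht f hf g hg hgm]
      rw [← hG0, h1, h2]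
    refine ⟨heq, ?_⟩
    intro t ht f hf g hg hgm hle
    have hGf := hmapG t ht f hf
    set A : Set Ω := {ω | g ω < G t f ω} with hAdef
    have hA : MeasurableSet[F t] A := measurableSet_lt hgm hGf.2
    set Z : Ω → ℝ := A.indicator (G t f - g) with hZdef
    have hZmem : Z ∈ H := hlocalH t ht A hA _ (subMem t ht _ hGf.1 g hg hgm)
    have hZnn : (0 : Ω → ℝ) ≤ Z := by
      intro ω
      by_cases hω : ω ∈ A
      · have : g ω < G t f ω := hω
        simp only [hZdef, Set.indicator_of_mem hω, Pi.sub_apply, Pi.zero_apply]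
        linarith
      · simp [hZdef, Set.indicator_of_notMem hω]
    have hE0Zle : E0 Z ≤ 0 := by
      rw [hZdef, ← heq t ht f hf g hg hgm A hA]
      exact hle A hA
    have hE0Zge : (0 : Ω → ℝ) ≤ E0 Z := by
      have := hmono 0 h0T 0 h0H Z hZmem hZnn
      rw [hpres 0 h0T 0 h0H measurable_const] at this
      rw [← hE0]
      exact this
    have hZ0 : Z = 0 := hsens0 Z hZmem hZnn (le_antisymm hE0Zle hE0Zge)
    intro ω
    by_contra hcon
    push_neg at hcon
    have hωA : ω ∈ A := hcon
    have h := congrFun hZ0 ω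
    simp only [hZdef, Set.indicator_of_mem hωA, Pi.sub_apply, Pi.zero_apply] at h
    have hlt : g ω < G t f ω := hcon
    linarith
  obtain ⟨heqE, hkeyE⟩ := main E hmap hmono hpres htrans hlocal hcons hE0
  obtain ⟨heqE', hkeyE'⟩ := main E' hmap' hmono' hpres' htrans' hlocal' hcons' hE'0
  -- the crucial vanishing: E0 (1_A (f - G t f)) = 0 for each extension
  have hvan : ∀ (G : ℕ → (Ω → ℝ) → (Ω → ℝ)),
      (∀ t, t ≤ T → ∀ f ∈ H, ∀ g ∈ H, Measurable[F t] g → ∀ A : Set Ω,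
        MeasurableSet[F t] A →
        E0 (A.indicator (f - g)) = E0 (A.indicator (G t f - g))) →
      (∀ t, t ≤ T → ∀ f ∈ H, G t f ∈ H ∧ Measurable[F t] (G t f)) →
      ∀ t, t ≤ T → ∀ f ∈ H, ∀ A : Set Ω, MeasurableSet[F t] A →
        E0 (A.indicator (f - G t f)) = 0 := by
    intro G heqG hmapG t ht f hf A hA
    obtain ⟨hGm, hGmeas⟩ := hmapG t ht f hf
    rw [heqG t ht f hf (G t f) hGm hGmeas A hA, sub_self, Set.indicator_zero', hE00]
  have hvanE := hvan E heqE hmap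
  have hvanE' := hvan E' heqE' hmap'
  have huniq : ∀ t, t ≤ T → ∀ f ∈ H, E t f = E' t f := by
    intro t ht f hf
    obtain ⟨hEm, hEmeas⟩ := hmap t ht f hf
    obtain ⟨hE'm, hE'meas⟩ := hmap' t ht f hf
    apply le_antisymm
    · exact hkeyE t ht f hf (E' t f) hE'm hE'meas
        (fun A hA => le_of_eq (hvanE' t ht f hf A hA))
    · exact hkeyE' t ht f hf (E t f) hEm hEmeas
        (fun A hA => le_of_eq (hvanE t ht f hf A hA))
  refine ⟨huniq, ?_⟩
  intro t ht f hf
  obtain ⟨hEm, hEmeas⟩ := hmap t ht f hf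
  have hmemS : E t f ∈ {g : Ω → ℝ | g ∈ H ∧ Measurable[F t] g ∧ (f - g) ∈ H ∧
      ∀ A : Set Ω, MeasurableSet[F t] A → E0 (A.indicator (f - g)) ≤ 0} :=
    ⟨hEm, hEmeas, subMem t ht f hf _ hEm hEmeas,
      fun A hA => le_of_eq (hvanE t ht f hf A hA)⟩
  constructor
  · intro g hg
    exact hkeyE t ht f hf g hg.1 hg.2.1 hg.2.2.2
  · intro b hb
    exact hb hmemS
end

section
/- In an arbitrage-free discrete-time market, the super-hedging price E_t(H) := essinf { H_t ∈ L^0(F_t) : ∃ predictable ξ with H_t + G_t(ξ) ≥ H } defines, for each t, a sensitive sublinear F_t-conditional expectation on L^∞(P); in particular −‖H‖_∞ ≤ E_t(H) ≤ ‖H‖_∞ for H ∈ L^∞(P). -/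
/-!
Fix an equivalent martingale measure `Q`. If `H ≤ f + G_t(ξ)`, backward induction over the
trading periods gives `E_Q[H | F_t] ≤ f`: each period's gain `ξ_k · (X_k - X_{k-1})` has zero
`F_{k-1}`-conditional mean, once localized to the `F_{k-1}`-measurable sets where `ξ_k` and the
capital accumulated so far are bounded. Hence `E_Q[H | F_t]` lies below the essential infimum of
the super-hedging prices; this yields the lower bound `-‖H‖_∞`, the case `λ = 0` of positive
homogeneity, and sensitivity (`E_Q[H | F_t] = 0` with `H ≥ 0` forces `H = 0`). Everything else
follows from the algebra of super-hedges: constants and `F_t`-measurable claims hedge themselves,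
hedges add, and they scale by nonnegative `F_t`-measurable factors.
-/

open MeasureTheory

variable {Ω : Type*}

/-- A self-financing trading strategy: `ξ k` (the position held over `(k-1, k]`) is
`F_{k-1}`-measurable. -/
def Predictable {m : MeasurableSpace Ω} {d : ℕ} (F : Filtration ℕ m)
    (ξ : ℕ → Ω → Fin d → ℝ) : Prop :=
  ∀ k : ℕ, 1 ≤ k → Measurable[F (k - 1)] (ξ k)

/-- Gains from trading with strategy `ξ` in `X` from time `t` to time `T`:
`G_t(ξ) = ∑_{k=t+1}^T ξ_k · (X_k - X_{k-1})`. -/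
def Gains {d : ℕ} (X ξ : ℕ → Ω → Fin d → ℝ) (t T : ℕ) (ω : Ω) : ℝ :=
  ∑ k ∈ Finset.Icc (t + 1) T, ∑ i, ξ k ω i * (X k ω i - X (k - 1) ω i)

/-- `Q` is an equivalent martingale measure for the price process `X` on `{0,…,T}`:
`Q` is a probability measure equivalent to `P` under which each component of `X` is
integrable and a martingale. -/
def IsEMM {m : MeasurableSpace Ω} {d : ℕ} (P Q : Measure Ω) (F : Filtration ℕ m)
    (X : ℕ → Ω → Fin d → ℝ) (T : ℕ) : Prop :=
  IsProbabilityMeasure Q ∧ (∀ A : Set Ω, P A = 0 ↔ Q A = 0) ∧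
    (∀ t, t ≤ T → ∀ i, Integrable (fun ω => X t ω i) Q) ∧
    (∀ t, t < T → ∀ i,
      (Q[(fun ω => X (t + 1) ω i)|F t]) =ᵐ[Q] fun ω => X t ω i)

/-- The set of super-hedging prices at time `t` for the claim `H`. -/
def SuperPrices {m : MeasurableSpace Ω} {d : ℕ} (P : Measure Ω)
    (F : Filtration ℕ m) (X : ℕ → Ω → Fin d → ℝ) (T t : ℕ) (H : Ω → ℝ) :
    Set (Ω → ℝ) :=
  {g | Measurable[F t] g ∧ ∃ ξ, Predictable F ξ ∧
    ∀ᵐ ω ∂P, H ω ≤ g ω + Gains X ξ t T ω}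

/-- The set of sub-hedging prices at time `t` for the claim `H`. -/
def SubPrices {m : MeasurableSpace Ω} {d : ℕ} (P : Measure Ω)
    (F : Filtration ℕ m) (X : ℕ → Ω → Fin d → ℝ) (T t : ℕ) (H : Ω → ℝ) :
    Set (Ω → ℝ) :=
  {g | Measurable[F t] g ∧ ∃ ξ, Predictable F ξ ∧
    ∀ᵐ ω ∂P, g ω + Gains X ξ t T ω ≤ H ω}

/-- The set of conditional expectations `E_Q[H | F_t]` over `Q ∈ M_e`. -/
def MPrices {m : MeasurableSpace Ω} {d : ℕ} (P : Measure Ω)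
    (F : Filtration ℕ m) (X : ℕ → Ω → Fin d → ℝ) (T t : ℕ) (H : Ω → ℝ) :
    Set (Ω → ℝ) :=
  {f | ∃ Q : Measure Ω, IsEMM P Q F X T ∧ f = Q[H|F t]}

/-- `g` is a `P`-a.e. upper bound of the family `S`. -/
def IsAEUpperBound {_m : MeasurableSpace Ω} (P : Measure Ω)
    (S : Set (Ω → ℝ)) (g : Ω → ℝ) : Prop :=
  ∀ f ∈ S, f ≤ᵐ[P] g

/-- `g` is a `P`-a.e. lower bound of the family `S`. -/
def IsAELowerBound {_m : MeasurableSpace Ω} (P : Measure Ω)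
    (S : Set (Ω → ℝ)) (g : Ω → ℝ) : Prop :=
  ∀ f ∈ S, g ≤ᵐ[P] f

/-- `g` is (a version of) the essential supremum of the family `S` under `P`. -/
def IsEssSupOf {_m : MeasurableSpace Ω} (P : Measure Ω)
    (S : Set (Ω → ℝ)) (g : Ω → ℝ) : Prop :=
  IsAEUpperBound P S g ∧ ∀ h, IsAEUpperBound P S h → g ≤ᵐ[P] h

/-- `g` is (a version of) the essential infimum of the family `S` under `P`. -/
def IsEssInfOf {_m : MeasurableSpace Ω} (P : Measure Ω)
    (S : Set (Ω → ℝ)) (g : Ω → ℝ) : Prop :=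
  IsAELowerBound P S g ∧ ∀ h, IsAELowerBound P S h → h ≤ᵐ[P] g

section CondExp

variable {m m0 : MeasurableSpace Ω} {μ : Measure[m0] Ω} [IsFiniteMeasure μ] {ι : Type*}
  [Fintype ι]

lemma condExp_le_of_le_add_sum_mul_of_bounded (hm : m ≤ m0) {W Y : Ω → ℝ}
    {η D : ι → Ω → ℝ} {c : ℝ} (hW : Integrable W μ) (hY : StronglyMeasurable[m] Y)
    (hYc : ∀ ω, |Y ω| ≤ c) (hη : ∀ i, StronglyMeasurable[m] (η i))
    (hηc : ∀ i ω, |η i ω| ≤ c) (hD : ∀ i, Integrable (D i) μ)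
    (hD0 : ∀ i, μ[D i|m] =ᵐ[μ] 0)
    (hle : W ≤ᵐ[μ] Y + ∑ i, η i * D i) :
    μ[W|m] ≤ᵐ[μ] Y := by
  have hYint : Integrable Y μ :=
    .of_bound (hY.mono hm).aestronglyMeasurable c (.of_forall hYc)
  have hηD : ∀ i, Integrable (η i * D i) μ := fun i =>
    (hD i).bdd_mul ((hη i).mono hm).aestronglyMeasurable (.of_forall (hηc i))
  have hηD0 : ∀ i, μ[η i * D i|m] =ᵐ[μ] 0 := fun i => by
    filter_upwards [condExp_stronglyMeasurable_mul_of_bound hm (hη i) (hD i) c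
      (.of_forall (hηc i)), hD0 i] with ω h h0
    simp [h, h0]
  calc μ[W|m] ≤ᵐ[μ] μ[Y + ∑ i, η i * D i|m] :=
        condExp_mono hW (hYint.add (integrable_finsetSum' _ fun i _ => hηD i)) hle
    _ =ᵐ[μ] μ[Y|m] + ∑ i, μ[η i * D i|m] :=
        (condExp_add hYint (integrable_finsetSum' _ fun i _ => hηD i) m).trans
          ((condExp_finsetSum (fun i _ => hηD i) m).add_left)
    _ =ᵐ[μ] Y := by
        have hsum : ∀ᵐ ω ∂μ, ∀ i, μ[η i * D i|m] ω = 0 := ae_all_iff.2 hηD0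
        filter_upwards [hsum] with ω hω
        simp [condExp_of_stronglyMeasurable hm hY hYint, hω]

lemma condExp_le_of_le_add_sum_mul (hm : m ≤ m0) {W Y : Ω → ℝ} {η D : ι → Ω → ℝ}
    (hW : Integrable W μ) (hY : StronglyMeasurable[m] Y)
    (hη : ∀ i, StronglyMeasurable[m] (η i)) (hD : ∀ i, Integrable (D i) μ)
    (hD0 : ∀ i, μ[D i|m] =ᵐ[μ] 0) (hle : W ≤ᵐ[μ] Y + ∑ i, η i * D i) :
    μ[W|m] ≤ᵐ[μ] Y := by
  -- `Y` and `η` need not be integrable: localize to the `m`-measurable sets where they are bounded.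
  set B : ℕ → Set Ω := fun n => Y ⁻¹' Set.Icc (-n) n ∩ ⋂ i, η i ⁻¹' Set.Icc (-n) n
  have hB : ∀ n, MeasurableSet[m] (B n) := fun n =>
    (hY.measurable measurableSet_Icc).inter
      (.iInter fun i => (hη i).measurable measurableSet_Icc)
  have hbound : ∀ n (f : Ω → ℝ), (∀ ω ∈ B n, |f ω| ≤ n) → ∀ ω, |(B n).indicator f ω| ≤ n := by
    intro n f hf ω
    by_cases hω : ω ∈ B n
    · simpa [hω] using hf ω hω
    · simp [hω]
  have hlocal : ∀ n, ∀ᵐ ω ∂μ, ω ∈ B n → μ[W|m] ω ≤ Y ω := by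
    intro n
    have hle_n : (B n).indicator W ≤ᵐ[μ] (B n).indicator Y + ∑ i, (B n).indicator (η i) * D i := by
      filter_upwards [hle] with ω hω
      by_cases hωB : ω ∈ B n
      · simpa [hωB] using hω
      · simp [hωB]
    filter_upwards [condExp_le_of_le_add_sum_mul_of_bounded hm (hW.indicator (hm _ (hB n)))
      (hY.indicator (hB n)) (hbound n Y fun ω hω => abs_le.2 hω.1)
      (fun i => (hη i).indicator (hB n))
      (fun i => hbound n (η i) fun ω hω => abs_le.2 (Set.mem_iInter.1 hω.2 i)) hD hD0 hle_n,
      condExp_indicator hW (hB n)] with ω hω hind hωB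
    simpa [hωB, hind] using hω
  have hcover : ∀ ω, ∃ n, ω ∈ B n := fun ω => by
    obtain ⟨n, hn⟩ := exists_nat_ge (|Y ω| + ∑ i, |η i ω|)
    refine ⟨n, abs_le.1 ?_, Set.mem_iInter.2 fun i => abs_le.1 ?_⟩
    · linarith [Finset.sum_nonneg fun i (_ : i ∈ Finset.univ) => abs_nonneg (η i ω)]
    · linarith [abs_nonneg (Y ω), Finset.single_le_sum (fun j _ => abs_nonneg (η j ω))
        (Finset.mem_univ i)]
  filter_upwards [ae_all_iff.2 hlocal] with ω hω
  obtain ⟨n, hn⟩ := hcover ω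
  exact hω n hn

lemma ae_eq_zero_of_condExp_nonpos (hm : m ≤ m0) {f : Ω → ℝ} (hf : Integrable f μ)
    (hf0 : 0 ≤ᵐ[μ] f) (hcond : μ[f|m] ≤ᵐ[μ] 0) : f =ᵐ[μ] 0 := by
  refine (integral_eq_zero_iff_of_nonneg_ae hf0 hf).1 (le_antisymm ?_ (integral_nonneg_of_ae hf0))
  rw [← integral_condExp hm]
  exact integral_nonpos_of_ae hcond

end CondExp

section Strategies

variable {d : ℕ}

lemma gains_self (X ξ : ℕ → Ω → Fin d → ℝ) (t : ℕ) (ω : Ω) : Gains X ξ t t ω = 0 := by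
  simp [Gains]

lemma gains_succ (X ξ : ℕ → Ω → Fin d → ℝ) {t s : ℕ} (h : t ≤ s) (ω : Ω) :
    Gains X ξ t (s + 1) ω =
      Gains X ξ t s ω + ∑ i, ξ (s + 1) ω i * (X (s + 1) ω i - X s ω i) := by
  rw [Gains, Finset.sum_Icc_succ_top (by omega), Gains, Nat.add_sub_cancel]

lemma gains_zero (X : ℕ → Ω → Fin d → ℝ) (t T : ℕ) (ω : Ω) : Gains X 0 t T ω = 0 := by
  simp [Gains]

lemma gains_add (X ξ ξ' : ℕ → Ω → Fin d → ℝ) (t T : ℕ) (ω : Ω) :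
    Gains X (ξ + ξ') t T ω = Gains X ξ t T ω + Gains X ξ' t T ω := by
  simp only [Gains, ← Finset.sum_add_distrib, Pi.add_apply, add_mul]

/-- The cut-off at `t` keeps the strategy predictable when `c` is only `F_t`-measurable. -/
def scaleFrom (t : ℕ) (c : Ω → ℝ) (ξ : ℕ → Ω → Fin d → ℝ) : ℕ → Ω → Fin d → ℝ :=
  fun k ω i => if t < k then c ω * ξ k ω i else 0

lemma gains_scaleFrom (X ξ : ℕ → Ω → Fin d → ℝ) (c : Ω → ℝ) (t T : ℕ) (ω : Ω) :
    Gains X (scaleFrom t c ξ) t T ω = c ω * Gains X ξ t T ω := by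
  simp only [Gains, Finset.mul_sum]
  refine Finset.sum_congr rfl fun k hk => Finset.sum_congr rfl fun i _ => ?_
  rw [scaleFrom, if_pos (by simp at hk; omega), mul_assoc]

variable {m : MeasurableSpace Ω} {F : Filtration ℕ m}

lemma predictable_zero : Predictable F (0 : ℕ → Ω → Fin d → ℝ) :=
  fun _ _ => measurable_const

lemma Predictable.add {ξ ξ' : ℕ → Ω → Fin d → ℝ} (hξ : Predictable F ξ)
    (hξ' : Predictable F ξ') : Predictable F (ξ + ξ') :=
  fun k hk => (hξ k hk).add (hξ' k hk)

lemma Predictable.scaleFrom {ξ : ℕ → Ω → Fin d → ℝ} (hξ : Predictable F ξ) {c : Ω → ℝ} {t : ℕ}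
    (hc : Measurable[F t] c) : Predictable F (scaleFrom t c ξ) := by
  intro k hk
  let _ : MeasurableSpace Ω := F (k - 1)
  by_cases htk : t < k
  · have hck : Measurable c := hc.mono (F.mono (by omega)) le_rfl
    have heq : _root_.scaleFrom t c ξ k = fun ω i => c ω * ξ k ω i := by
      funext ω i; simp [_root_.scaleFrom, htk]
    rw [heq]
    exact measurable_pi_lambda _ fun i => hck.mul (hξ k hk).eval
  · have heq : _root_.scaleFrom t c ξ k = 0 := by
      funext ω i; simp [_root_.scaleFrom, htk]
    rw [heq]
    exact measurable_const

lemma Predictable.measurable_gains {X ξ : ℕ → Ω → Fin d → ℝ} (hξ : Predictable F ξ)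
    (hX : ∀ t, Measurable[F t] (X t)) (t s : ℕ) : Measurable[F s] (Gains X ξ t s) := by
  have hcoord : ∀ j ≤ s, ∀ Z : Ω → Fin d → ℝ, Measurable[F j] Z → ∀ i,
      Measurable[F s] fun ω => Z ω i := fun j hj Z hZ i =>
    ((measurable_pi_apply i).comp hZ).mono (F.mono hj) le_rfl
  let _ : MeasurableSpace Ω := F s
  refine Finset.measurable_sum _ fun k hk => Finset.measurable_sum _ fun i _ => ?_
  obtain ⟨hk1, hk2⟩ := Finset.mem_Icc.mp hk
  exact (hcoord _ (by omega) _ (hξ k (by omega)) i).mul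
    ((hcoord _ hk2 _ (hX k) i).sub (hcoord _ (by omega) _ (hX (k - 1)) i))

end Strategies

section SuperPrices

variable {m : MeasurableSpace Ω} {d : ℕ} {F : Filtration ℕ m} {P : Measure Ω}
  {X : ℕ → Ω → Fin d → ℝ} {T t : ℕ} {H H' f f' : Ω → ℝ}

lemma const_mem_superPrices {c : ℝ} (hc : ∀ᵐ ω ∂P, H ω ≤ c) :
    (fun _ => c) ∈ SuperPrices P F X T t H :=
  ⟨measurable_const, 0, predictable_zero, by simpa [gains_zero] using hc⟩

lemma self_mem_superPrices (hH : Measurable[F t] H) : H ∈ SuperPrices P F X T t H :=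
  ⟨hH, 0, predictable_zero, .of_forall fun ω => by simp [gains_zero]⟩

lemma superPrices_anti (hle : H ≤ᵐ[P] H') :
    SuperPrices P F X T t H' ⊆ SuperPrices P F X T t H := by
  rintro f ⟨hf, ξ, hξ, hge⟩
  exact ⟨hf, ξ, hξ, by filter_upwards [hge, hle] with ω h1 h2 using h2.trans h1⟩

lemma add_mem_superPrices (hf : f ∈ SuperPrices P F X T t H)
    (hf' : f' ∈ SuperPrices P F X T t H') : f + f' ∈ SuperPrices P F X T t (H + H') := by
  obtain ⟨hf, ξ, hξ, hge⟩ := hf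
  obtain ⟨hf', ξ', hξ', hge'⟩ := hf'
  refine ⟨hf.add hf', ξ + ξ', hξ.add hξ', ?_⟩
  filter_upwards [hge, hge'] with ω h h'
  simp only [Pi.add_apply, gains_add]
  linarith

lemma mul_mem_superPrices {lam : Ω → ℝ} (hlam : Measurable[F t] lam) (hlam0 : 0 ≤ lam)
    (hf : f ∈ SuperPrices P F X T t H) : lam * f ∈ SuperPrices P F X T t (lam * H) := by
  obtain ⟨hf, ξ, hξ, hge⟩ := hf
  refine ⟨hlam.mul hf, scaleFrom t lam ξ, hξ.scaleFrom hlam, ?_⟩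
  filter_upwards [hge] with ω h
  simpa only [Pi.mul_apply, gains_scaleFrom, mul_add] using
    mul_le_mul_of_nonneg_left h (hlam0 ω)

lemma inv_mul_mem_superPrices {lam : Ω → ℝ} {c : ℝ} (hlam : Measurable[F t] lam)
    (hlam0 : 0 ≤ lam) (hc : ∀ᵐ ω ∂P, H ω ≤ c) (hf' : f' ∈ SuperPrices P F X T t (lam * H)) :
    (fun ω => if 0 < lam ω then (lam ω)⁻¹ * f' ω else c) ∈ SuperPrices P F X T t H := by
  obtain ⟨hf', ξ, hξ, hge⟩ := hf'
  have hpos : MeasurableSet[F t] {ω | 0 < lam ω} := measurableSet_lt measurable_const hlam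
  refine ⟨Measurable.ite hpos (hlam.inv.mul hf') measurable_const, scaleFrom t lam⁻¹ ξ,
    hξ.scaleFrom hlam.inv, ?_⟩
  filter_upwards [hge, hc] with ω h hcω
  rw [gains_scaleFrom]
  split_ifs with hω
  · have := mul_le_mul_of_nonneg_left h (inv_nonneg.2 hω.le)
    rwa [Pi.mul_apply, ← mul_assoc, inv_mul_cancel₀ hω.ne', one_mul, mul_add] at this
  · simpa [le_antisymm (not_lt.1 hω) (hlam0 ω)] using hcω

end SuperPrices

section EssInf

variable {m : MeasurableSpace Ω} {P : Measure Ω} {S S' S'' : Set (Ω → ℝ)} {g g' g'' : Ω → ℝ}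

lemma IsEssInfOf.ae_le_of_subset (hS : S' ⊆ S) (hg : IsEssInfOf P S g)
    (hg' : IsEssInfOf P S' g') : g ≤ᵐ[P] g' :=
  hg'.2 g fun f hf => hg.1 f (hS hf)

lemma IsEssInfOf.ae_le_add (hadd : ∀ f ∈ S, ∀ f' ∈ S', f + f' ∈ S'') (hg : IsEssInfOf P S g)
    (hg' : IsEssInfOf P S' g') (hg'' : IsEssInfOf P S'' g'') : g'' ≤ᵐ[P] g + g' := by
  have hg''_sub : ∀ f' ∈ S', g'' - f' ≤ᵐ[P] g := fun f' hf' =>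
    hg.2 _ fun f hf => by
      filter_upwards [hg''.1 _ (hadd f hf f' hf')] with ω h
      simp only [Pi.sub_apply, Pi.add_apply] at h ⊢
      linarith
  have := hg'.2 (g'' - g) fun f' hf' => by
    filter_upwards [hg''_sub f' hf'] with ω h
    simp only [Pi.sub_apply] at h ⊢
    linarith
  filter_upwards [this] with ω h
  simp only [Pi.sub_apply, Pi.add_apply] at h ⊢
  linarith

/-- Where `lam > 0`, `g' / lam` is a lower bound of `S`; where `lam = 0`, any element of `S`
bounds `g'` by `0`. -/
lemma IsEssInfOf.ae_le_mul {lam : Ω → ℝ} (hlam0 : 0 ≤ lam) (hS : S.Nonempty)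
    (hmul : ∀ f ∈ S, lam * f ∈ S') (hg : IsEssInfOf P S g) (hg' : IsEssInfOf P S' g') :
    g' ≤ᵐ[P] lam * g := by
  have hlower : IsAELowerBound P S fun ω => if 0 < lam ω then (lam ω)⁻¹ * g' ω else g ω :=
    fun f hf => by
      filter_upwards [hg'.1 _ (hmul f hf), hg.1 f hf] with ω h hgf
      split_ifs with hω
      · rw [inv_mul_le_iff₀ hω]; exact h
      · exact hgf
  obtain ⟨f₀, hf₀⟩ := hS
  filter_upwards [hg.2 _ hlower, hg'.1 _ (hmul f₀ hf₀)] with ω h h₀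
  simp only [Pi.mul_apply] at h₀ ⊢
  split_ifs at h with hω
  · rwa [inv_mul_le_iff₀ hω] at h
  · simpa [le_antisymm (not_lt.1 hω) (hlam0 ω)] using h₀

lemma IsEssInfOf.mul_ae_le {lam : Ω → ℝ} (hlam0 : 0 ≤ lam)
    (hdiv : ∀ f' ∈ S', ∃ f ∈ S, lam * f ≤ᵐ[P] f') (hg : IsEssInfOf P S g)
    (hg' : IsEssInfOf P S' g') : lam * g ≤ᵐ[P] g' :=
  hg'.2 _ fun f' hf' => by
    obtain ⟨f, hf, hlamf⟩ := hdiv f' hf'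
    filter_upwards [hg.1 f hf, hlamf] with ω h h'
    exact (mul_le_mul_of_nonneg_left h (hlam0 ω)).trans h'

end EssInf

namespace IsEMM

variable {m : MeasurableSpace Ω} {d : ℕ} {F : Filtration ℕ m} {P Q : Measure Ω}
  {X : ℕ → Ω → Fin d → ℝ} {T : ℕ}

lemma ae_eq (hQ : IsEMM P Q F X T) : ae P = ae Q :=
  Filter.ext fun s => by simp only [mem_ae_iff, hQ.2.1]

lemma integrable (hQ : IsEMM P Q F X T) {k : ℕ} (hk : k ≤ T) (i : Fin d) :
    Integrable (fun ω => X k ω i) Q :=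
  hQ.2.2.1 k hk i

lemma condExp_increment_eq_zero (hQ : IsEMM P Q F X T) (hX : ∀ t, Measurable[F t] (X t))
    {s : ℕ} (hs : s < T) (i : Fin d) :
    Q[fun ω => X (s + 1) ω i - X s ω i|F s] =ᵐ[Q] 0 := by
  have := hQ.1
  have hXs : Q[fun ω => X s ω i|F s] = fun ω => X s ω i :=
    condExp_of_stronglyMeasurable (F.le s)
      ((measurable_pi_apply i).comp (hX s)).stronglyMeasurable (hQ.integrable hs.le i)
  filter_upwards [condExp_sub (m := F s) (hQ.integrable hs i) (hQ.integrable hs.le i),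
    hQ.2.2.2 s hs i] with ω hsub hmart
  change Q[(fun ω => X (s + 1) ω i) - fun ω => X s ω i|F s] ω = 0
  rw [hsub, Pi.sub_apply, hmart, hXs, sub_self]

lemma condExp_le_of_ae_le_add_gains (hQ : IsEMM P Q F X T) (hX : ∀ t, Measurable[F t] (X t))
    {t : ℕ} (ht : t ≤ T) {H f : Ω → ℝ} (hH : Measurable[F T] H) (hHQ : Integrable H Q)
    (hf : Measurable[F t] f) {ξ : ℕ → Ω → Fin d → ℝ} (hξ : Predictable F ξ)
    (hle : ∀ᵐ ω ∂Q, H ω ≤ f ω + Gains X ξ t T ω) :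
    Q[H|F t] ≤ᵐ[Q] f := by
  have := hQ.1
  have hback : ∀ s, t ≤ s → s ≤ T → Q[H|F s] ≤ᵐ[Q] fun ω => f ω + Gains X ξ t s ω := by
    intro s hts hsT
    induction hsT using Nat.decreasingInduction with
    | self => rwa [condExp_of_stronglyMeasurable (F.le T) hH.stronglyMeasurable hHQ]
    | of_succ s hsT ih =>
      calc Q[H|F s] =ᵐ[Q] Q[Q[H|F (s + 1)]|F s] :=
            (condExp_condExp_of_le (F.mono s.le_succ) (F.le _)).symm
        _ ≤ᵐ[Q] fun ω => f ω + Gains X ξ t s ω := by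
          refine condExp_le_of_le_add_sum_mul (F.le s) integrable_condExp
            ((hf.mono (F.mono hts) le_rfl).add (hξ.measurable_gains hX t s)).stronglyMeasurable
            (fun i => ((measurable_pi_apply i).comp (hξ (s + 1) s.succ_pos)).stronglyMeasurable)
            (fun i => (hQ.integrable hsT i).sub (hQ.integrable hsT.le i))
            (hQ.condExp_increment_eq_zero hX hsT) ?_
          filter_upwards [ih (by omega)] with ω h
          simpa [gains_succ X ξ hts, add_assoc] using h
  filter_upwards [hback t le_rfl ht] with ω h
  simpa [gains_self] using h

lemma condExp_ae_le_of_mem_superPrices (hQ : IsEMM P Q F X T)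
    (hX : ∀ t, Measurable[F t] (X t)) {t : ℕ} (ht : t ≤ T) {H f : Ω → ℝ}
    (hH : Measurable[F T] H) (hHQ : Integrable H Q) (hf : f ∈ SuperPrices P F X T t H) :
    Q[H|F t] ≤ᵐ[P] f := by
  obtain ⟨hf, ξ, hξ, hle⟩ := hf
  rw [hQ.ae_eq] at hle ⊢
  exact hQ.condExp_le_of_ae_le_add_gains hX ht hH hHQ hf hξ hle

lemma condExp_ae_le_of_isEssInfOf (hQ : IsEMM P Q F X T)
    (hX : ∀ t, Measurable[F t] (X t)) {t : ℕ} (ht : t ≤ T) {H g : Ω → ℝ}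
    (hH : Measurable[F T] H) (hHQ : Integrable H Q)
    (hg : IsEssInfOf P (SuperPrices P F X T t H) g) : Q[H|F t] ≤ᵐ[P] g :=
  hg.2 _ fun _ hf => hQ.condExp_ae_le_of_mem_superPrices hX ht hH hHQ hf

lemma exists_mem_superPrices_mul_ae_le (hQ : IsEMM P Q F X T)
    (hX : ∀ t, Measurable[F t] (X t)) {t : ℕ} (ht : t ≤ T) {H lam f' : Ω → ℝ} {c C : ℝ}
    (hH : Measurable[F T] H) (hHQ : Integrable H Q) (hc : ∀ᵐ ω ∂P, H ω ≤ c)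
    (hlam : Measurable[F t] lam) (hlam0 : 0 ≤ lam) (hlamC : ∀ᵐ ω ∂P, |lam ω| ≤ C)
    (hf' : f' ∈ SuperPrices P F X T t (lam * H)) :
    ∃ f ∈ SuperPrices P F X T t H, lam * f ≤ᵐ[P] f' := by
  have := hQ.1
  have hlamCQ : ∀ᵐ ω ∂Q, ‖lam ω‖ ≤ C := by rw [← hQ.ae_eq]; simpa using hlamC
  have hpull : Q[lam * H|F t] =ᵐ[P] lam * Q[H|F t] := by
    rw [hQ.ae_eq]
    exact condExp_stronglyMeasurable_mul_of_bound (F.le t) hlam.stronglyMeasurable hHQ C hlamCQ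
  have hlamH : Measurable[F T] (lam * H) := by
    let _ : MeasurableSpace Ω := F T
    exact (hlam.mono (F.mono ht) le_rfl).mul hH
  have hlow := hQ.condExp_ae_le_of_mem_superPrices hX ht hlamH
    (hHQ.bdd_mul (hlam.mono (F.le t) le_rfl).aestronglyMeasurable hlamCQ) hf'
  refine ⟨_, inv_mul_mem_superPrices hlam hlam0 hc hf', ?_⟩
  filter_upwards [hpull, hlow] with ω hpullω hlowω
  simp only [Pi.mul_apply]
  split_ifs with hω
  · rw [mul_inv_cancel_left₀ hω.ne']
  · simpa [le_antisymm (not_lt.1 hω) (hlam0 ω), hpullω] using hlowω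

end IsEMM

theorem superhedging_price_is_sensitive_sublinear_expectation_general
    {m : MeasurableSpace Ω} {d T : ℕ} (F : Filtration ℕ m)
    (P : Measure Ω)
    (X : ℕ → Ω → Fin d → ℝ) (hX : ∀ t, Measurable[F t] (X t))
    (hFT : (F T : MeasurableSpace Ω) = m)
    (hNA : ∃ Q : Measure Ω, IsEMM P Q F X T)
    (t : ℕ) (ht : t ≤ T) :
    -- bounds: -‖H‖_∞ ≤ E_t(H) ≤ ‖H‖_∞
    (∀ (H : Ω → ℝ) (C : ℝ), Measurable H → (∀ᵐ ω ∂P, |H ω| ≤ C) →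
      ∀ g, IsEssInfOf P (SuperPrices P F X T t H) g →
        ∀ᵐ ω ∂P, -C ≤ g ω ∧ g ω ≤ C) ∧
    -- monotonicity
    (∀ (H H' : Ω → ℝ) (C : ℝ), Measurable H → Measurable H' →
      (∀ᵐ ω ∂P, |H ω| ≤ C) → (∀ᵐ ω ∂P, |H' ω| ≤ C) → H ≤ᵐ[P] H' →
      ∀ g g', IsEssInfOf P (SuperPrices P F X T t H) g →
        IsEssInfOf P (SuperPrices P F X T t H') g' → g ≤ᵐ[P] g') ∧
    -- preservation of F_t-measurable claims
    (∀ (H : Ω → ℝ) (C : ℝ), Measurable[F t] H → (∀ᵐ ω ∂P, |H ω| ≤ C) →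
      ∀ g, IsEssInfOf P (SuperPrices P F X T t H) g → g =ᵐ[P] H) ∧
    -- subadditivity
    (∀ (H H' : Ω → ℝ) (C : ℝ), Measurable H → Measurable H' →
      (∀ᵐ ω ∂P, |H ω| ≤ C) → (∀ᵐ ω ∂P, |H' ω| ≤ C) →
      ∀ g g' g'', IsEssInfOf P (SuperPrices P F X T t H) g →
        IsEssInfOf P (SuperPrices P F X T t H') g' →
        IsEssInfOf P (SuperPrices P F X T t (H + H')) g'' →
        g'' ≤ᵐ[P] g + g') ∧
    -- positive homogeneity w.r.t. nonnegative bounded F_t-measurable multipliers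
    (∀ (H lam : Ω → ℝ) (C : ℝ), Measurable H → (∀ᵐ ω ∂P, |H ω| ≤ C) →
      Measurable[F t] lam → (0 ≤ lam) → (∀ᵐ ω ∂P, |lam ω| ≤ C) →
      ∀ g g', IsEssInfOf P (SuperPrices P F X T t H) g →
        IsEssInfOf P (SuperPrices P F X T t (lam * H)) g' →
        g' =ᵐ[P] lam * g) ∧
    -- sensitivity
    (∀ (H : Ω → ℝ) (C : ℝ), Measurable H → (∀ᵐ ω ∂P, |H ω| ≤ C) →
      (0 ≤ᵐ[P] H) → ∀ g, IsEssInfOf P (SuperPrices P F X T t H) g →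
        g =ᵐ[P] (0 : Ω → ℝ) → H =ᵐ[P] (0 : Ω → ℝ)) := by
  obtain ⟨Q, hQ⟩ := hNA
  have := hQ.1
  have hmeasT : ∀ {H : Ω → ℝ}, Measurable H → Measurable[F T] H := fun hH => by rwa [hFT]
  have hint : ∀ {H : Ω → ℝ} {C : ℝ}, Measurable H → (∀ᵐ ω ∂P, |H ω| ≤ C) → Integrable H Q :=
    fun hH hC => .of_bound hH.aestronglyMeasurable _ (by rw [← hQ.ae_eq]; simpa using hC)
  have hlow : ∀ {H g : Ω → ℝ} {C : ℝ}, Measurable H → (∀ᵐ ω ∂P, |H ω| ≤ C) →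
      IsEssInfOf P (SuperPrices P F X T t H) g → Q[H|F t] ≤ᵐ[P] g := fun hH hC hg =>
    hQ.condExp_ae_le_of_isEssInfOf hX ht (hmeasT hH) (hint hH hC) hg
  refine ⟨?bounds, ?mono, ?preserve, ?subadd, ?homog, ?sens⟩
  · intro H C hH hC g hg
    have hCQ : ∀ᵐ ω ∂P, |Q[H|F t] ω| ≤ C := by
      rw [hQ.ae_eq] at hC ⊢
      exact ae_bdd_abs_condExp_of_ae_bdd_abs hC
    filter_upwards [hCQ, hlow hH hC hg,
      hg.1 _ (const_mem_superPrices (hC.mono fun _ h => (abs_le.1 h).2))] with ω h1 h2 h3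
    exact ⟨(abs_le.1 h1).1.trans h2, h3⟩
  · intro H H' C _ _ _ _ hle g g' hg hg'
    exact hg.ae_le_of_subset (superPrices_anti hle) hg'
  · intro H C hH hC g hg
    have hHm : Measurable H := hH.mono (F.le t) le_rfl
    refine (hg.1 H (self_mem_superPrices hH)).antisymm ?_
    simpa [condExp_of_stronglyMeasurable (F.le t) hH.stronglyMeasurable (hint hHm hC)]
      using hlow hHm hC hg
  · intro H H' C _ _ _ _ g g' g'' hg hg' hg''
    exact hg.ae_le_add (fun f hf f' hf' => add_mem_superPrices hf hf') hg' hg''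
  · intro H lam C hH hC hlam hlam0 hlamC g g' hg hg'
    have hHC : ∀ᵐ ω ∂P, H ω ≤ C := hC.mono fun _ h => (abs_le.1 h).2
    exact (hg.ae_le_mul hlam0 ⟨_, const_mem_superPrices hHC⟩
      (fun f hf => mul_mem_superPrices hlam hlam0 hf) hg').antisymm
      (hg.mul_ae_le hlam0 (fun f' hf' => hQ.exists_mem_superPrices_mul_ae_le hX ht (hmeasT hH)
        (hint hH hC) hHC hlam hlam0 hlamC hf') hg')
  · intro H C hH hC hH0 g hg hg0
    have hcond := (hlow hH hC hg).trans_eq hg0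
    rw [hQ.ae_eq] at hH0 hcond ⊢
    exact ae_eq_zero_of_condExp_nonpos (F.le t) (hint hH hC) hH0 hcond

/-- In an arbitrage-free market, the smallest super-hedging price
`E_t(H) = essinf SuperPrices` defines a sensitive sublinear `F_t`-conditional
expectation on `L^∞(P)`: it is bounded by `±‖H‖_∞`, monotone, preserves
`F_t`-measurable claims, is subadditive and positively homogeneous with respect to
nonnegative bounded `F_t`-measurable multipliers, and is sensitive. -/
theorem superhedging_price_is_sensitive_sublinear_expectation
    {m : MeasurableSpace Ω} {d T : ℕ} (F : Filtration ℕ m)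
    (P : Measure Ω) [IsProbabilityMeasure P]
    (X : ℕ → Ω → Fin d → ℝ) (hX : ∀ t, Measurable[F t] (X t))
    (hFT : (F T : MeasurableSpace Ω) = m)
    (hNA : ∃ Q : Measure Ω, IsEMM P Q F X T)
    (t : ℕ) (ht : t ≤ T) :
    -- bounds: -‖H‖_∞ ≤ E_t(H) ≤ ‖H‖_∞
    (∀ (H : Ω → ℝ) (C : ℝ), Measurable H → (∀ᵐ ω ∂P, |H ω| ≤ C) →
      ∀ g, IsEssInfOf P (SuperPrices P F X T t H) g →
        ∀ᵐ ω ∂P, -C ≤ g ω ∧ g ω ≤ C) ∧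
    -- monotonicity
    (∀ (H H' : Ω → ℝ) (C : ℝ), Measurable H → Measurable H' →
      (∀ᵐ ω ∂P, |H ω| ≤ C) → (∀ᵐ ω ∂P, |H' ω| ≤ C) → H ≤ᵐ[P] H' →
      ∀ g g', IsEssInfOf P (SuperPrices P F X T t H) g →
        IsEssInfOf P (SuperPrices P F X T t H') g' → g ≤ᵐ[P] g') ∧
    -- preservation of F_t-measurable claims
    (∀ (H : Ω → ℝ) (C : ℝ), Measurable[F t] H → (∀ᵐ ω ∂P, |H ω| ≤ C) →
      ∀ g, IsEssInfOf P (SuperPrices P F X T t H) g → g =ᵐ[P] H) ∧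
    -- subadditivity
    (∀ (H H' : Ω → ℝ) (C : ℝ), Measurable H → Measurable H' →
      (∀ᵐ ω ∂P, |H ω| ≤ C) → (∀ᵐ ω ∂P, |H' ω| ≤ C) →
      ∀ g g' g'', IsEssInfOf P (SuperPrices P F X T t H) g →
        IsEssInfOf P (SuperPrices P F X T t H') g' →
        IsEssInfOf P (SuperPrices P F X T t (H + H')) g'' →
        g'' ≤ᵐ[P] g + g') ∧
    -- positive homogeneity w.r.t. nonnegative bounded F_t-measurable multipliers
    (∀ (H lam : Ω → ℝ) (C : ℝ), Measurable H → (∀ᵐ ω ∂P, |H ω| ≤ C) →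
      Measurable[F t] lam → (0 ≤ lam) → (∀ᵐ ω ∂P, |lam ω| ≤ C) →
      ∀ g g', IsEssInfOf P (SuperPrices P F X T t H) g →
        IsEssInfOf P (SuperPrices P F X T t (lam * H)) g' →
        g' =ᵐ[P] lam * g) ∧
    -- sensitivity
    (∀ (H : Ω → ℝ) (C : ℝ), Measurable H → (∀ᵐ ω ∂P, |H ω| ≤ C) →
      (0 ≤ᵐ[P] H) → ∀ g, IsEssInfOf P (SuperPrices P F X T t H) g →
        g =ᵐ[P] (0 : Ω → ℝ) → H =ᵐ[P] (0 : Ω → ℝ)) :=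
  superhedging_price_is_sensitive_sublinear_expectation_general F P X hX hFT hNA t ht
end

section
/- For every t and every claim H ∈ L^0_+(F_T), the set { E_Q[H | F_t] : Q ∈ M_e } is F_t-countably convex: for (Q^n) ⊆ M_e and F_t-measurable λ^n ≥ 0 with Σ λ^n = 1, there exists Q ∈ M_e with Σ_n λ^n E_{Q^n}[H | F_t] = E_Q[H | F_t]. -/
/-! With `μ := Q 0`, let `Q'` agree with `μ` on `F t` and have conditional law
`∑ λⁿ Qⁿ(· | F t)` given `F t`, i.e. `dQ'/dμ = ∑ λⁿ Zⁿ / Zⁿₜ` where `Zⁿ = dQⁿ/dμ` and `Zⁿₜ` is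
its restriction to `F t`. By construction `E_{Q'}[H | F t] = ∑ λⁿ E_{Qⁿ}[H | F t]`, and `Q' ~ P`
since all densities are positive. Above time `t` the conditional densities `Zⁿ / Zⁿₜ` transport
each `Qⁿ`-martingale step to `Q'`, and up to time `t` the measure `Q'` is just `μ`. Working with
`ℝ≥0∞`-valued conditional expectations of the nonnegative prices avoids any integrability issue
until the very end. -/

open MeasureTheory

variable {Ω : Type*}

open scoped ENNReal

/-- `f` is a version of the conditional expectation `E_Q[H | mt]` of the
nonnegative (extended-real valued) claim `H`, understood in `[0, ∞]`. -/
def IsCondExpNN {_m : MeasurableSpace Ω} (Q : Measure Ω)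
    (mt : MeasurableSpace Ω) (H f : Ω → ℝ≥0∞) : Prop :=
  Measurable[mt] f ∧ ∀ A : Set Ω, MeasurableSet[mt] A →
    ∫⁻ ω in A, f ω ∂Q = ∫⁻ ω in A, H ω ∂Q

theorem setLIntegral_eq_lintegral_indicator_one_mul {m : MeasurableSpace Ω} {μ : Measure Ω}
    {A : Set Ω} (hA : MeasurableSet A) (g : Ω → ℝ≥0∞) :
    ∫⁻ ω in A, g ω ∂μ = ∫⁻ ω, A.indicator 1 ω * g ω ∂μ := by
  rw [← lintegral_indicator hA]
  congr 1 with ω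
  by_cases h : ω ∈ A <;> simp [h]

section IsCondExpNN

variable {mt m : MeasurableSpace Ω} {ν : Measure Ω} {φ f : Ω → ℝ≥0∞}

theorem IsCondExpNN.lintegral_eq (h : IsCondExpNN ν mt φ f) :
    ∫⁻ ω, f ω ∂ν = ∫⁻ ω, φ ω ∂ν := by
  simpa using h.2 Set.univ MeasurableSet.univ

theorem IsCondExpNN.lintegral_mul (hm : mt ≤ m) (h : IsCondExpNN ν mt φ f)
    (hφ : Measurable φ) {χ : Ω → ℝ≥0∞} (hχ : Measurable[mt] χ) :
    ∫⁻ ω, χ ω * φ ω ∂ν = ∫⁻ ω, χ ω * f ω ∂ν := by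
  have htrim : (ν.withDensity φ).trim hm = (ν.withDensity f).trim hm := by
    refine @Measure.ext Ω mt _ _ fun A hA => ?_
    rw [trim_measurableSet_eq hm hA, trim_measurableSet_eq hm hA,
      withDensity_apply _ (hm _ hA), withDensity_apply _ (hm _ hA), h.2 A hA]
  have hχ' : Measurable χ := hχ.mono hm le_rfl
  calc ∫⁻ ω, χ ω * φ ω ∂ν = ∫⁻ ω, χ ω ∂(ν.withDensity φ).trim hm := by
        rw [lintegral_trim hm hχ, lintegral_withDensity_eq_lintegral_mul _ hφ hχ']
        simp_rw [Pi.mul_apply, mul_comm]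
    _ = ∫⁻ ω, χ ω * f ω ∂ν := by
        rw [htrim, lintegral_trim hm hχ,
          lintegral_withDensity_eq_lintegral_mul _ (h.1.mono hm le_rfl) hχ']
        simp_rw [Pi.mul_apply, mul_comm]

end IsCondExpNN

theorem lintegral_inv_trim_rnDeriv_mul {mt m : MeasurableSpace Ω} (hm : mt ≤ m)
    {μ ν : Measure Ω} [IsFiniteMeasure μ] [IsFiniteMeasure ν] (hνμ : ν ≪ μ) (hμν : μ ≪ ν)
    {χ : Ω → ℝ≥0∞} (hχ : Measurable[mt] χ) :
    ∫⁻ ω, ((ν.trim hm).rnDeriv (μ.trim hm) ω)⁻¹ * χ ω ∂ν = ∫⁻ ω, χ ω ∂μ := by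
  set e := (ν.trim hm).rnDeriv (μ.trim hm)
  have he : Measurable[mt] (fun ω => (e ω)⁻¹ * χ ω) :=
    (Measure.measurable_rnDeriv _ _).inv.mul hχ
  have hpos : ∀ᵐ ω ∂μ.trim hm, e ω ≠ 0 :=
    (Measure.rnDeriv_pos' (hμν.trim hm)).mono fun _ h => h.ne'
  have hfin : ∀ᵐ ω ∂μ.trim hm, e ω ≠ ∞ := Measure.rnDeriv_ne_top _ _
  calc ∫⁻ ω, (e ω)⁻¹ * χ ω ∂ν = ∫⁻ ω, (e ω)⁻¹ * χ ω ∂ν.trim hm := (lintegral_trim hm he).symm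
    _ = ∫⁻ ω, e ω * ((e ω)⁻¹ * χ ω) ∂μ.trim hm :=
        (lintegral_rnDeriv_mul (hνμ.trim hm) he.aemeasurable).symm
    _ = ∫⁻ ω, χ ω ∂μ.trim hm := by
        refine lintegral_congr_ae ?_
        filter_upwards [hpos, hfin] with ω h0 htop
        rw [← mul_assoc, ENNReal.mul_inv_cancel h0 htop, one_mul]
    _ = ∫⁻ ω, χ ω ∂μ := lintegral_trim hm hχ

section CondMixture

variable {mt m : MeasurableSpace Ω} (hm : mt ≤ m) (μ : Measure Ω) (ν : ℕ → Measure Ω)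
  (w : ℕ → Ω → ℝ≥0∞)

/-- The pasting of `μ` with the `mt`-measurable mixture `∑ n, w n • ν n (· | mt)`:
its law on `mt` is that of `μ` and its conditional law given `mt` is the mixture. -/
noncomputable def condMixture : Measure Ω :=
  μ.withDensity fun ω =>
    ∑' n, w n ω / ((ν n).trim hm).rnDeriv (μ.trim hm) ω * (ν n).rnDeriv μ ω

variable {hm μ ν w}

theorem condMixture_absolutelyContinuous : condMixture hm μ ν w ≪ μ :=
  withDensity_absolutelyContinuous _ _

variable [IsFiniteMeasure μ] [∀ n, IsFiniteMeasure (ν n)]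

theorem lintegral_condMixture (hνμ : ∀ n, ν n ≪ μ) (hw : ∀ n, Measurable[mt] (w n))
    {g : Ω → ℝ≥0∞} (hg : Measurable g) :
    ∫⁻ ω, g ω ∂condMixture hm μ ν w =
      ∑' n, ∫⁻ ω, w n ω / ((ν n).trim hm).rnDeriv (μ.trim hm) ω * g ω ∂ν n := by
  have hc : ∀ n, Measurable fun ω => w n ω / ((ν n).trim hm).rnDeriv (μ.trim hm) ω := fun n =>
    ((hw n).div (Measure.measurable_rnDeriv _ _)).mono hm le_rfl
  have hD : ∀ n, Measurable ((ν n).rnDeriv μ) := fun n => Measure.measurable_rnDeriv _ _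
  have hZ : Measurable fun ω =>
      ∑' n, w n ω / ((ν n).trim hm).rnDeriv (μ.trim hm) ω * (ν n).rnDeriv μ ω :=
    Measurable.tsum fun n => (hc n).mul (hD n)
  rw [condMixture, lintegral_withDensity_eq_lintegral_mul _ hZ hg]
  calc _ = ∫⁻ ω, ∑' n, (ν n).rnDeriv μ ω *
          (w n ω / ((ν n).trim hm).rnDeriv (μ.trim hm) ω * g ω) ∂μ := by
        refine lintegral_congr fun ω => ?_
        simp only [Pi.mul_apply, ← ENNReal.tsum_mul_right]
        exact tsum_congr fun n => by ring
    _ = ∑' n, ∫⁻ ω, (ν n).rnDeriv μ ω *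
          (w n ω / ((ν n).trim hm).rnDeriv (μ.trim hm) ω * g ω) ∂μ :=
        lintegral_tsum fun n => ((hD n).mul ((hc n).mul hg)).aemeasurable
    _ = _ := tsum_congr fun n => lintegral_rnDeriv_mul (hνμ n) ((hc n).mul hg).aemeasurable

theorem lintegral_mul_condMixture (hνμ : ∀ n, ν n ≪ μ) (hμν : ∀ n, μ ≪ ν n)
    (hw : ∀ n, Measurable[mt] (w n)) {φ : Ω → ℝ≥0∞} {f : ℕ → Ω → ℝ≥0∞} (hφ : Measurable φ)
    (hf : ∀ n, IsCondExpNN (ν n) mt φ (f n)) {ψ : Ω → ℝ≥0∞} (hψ : Measurable[mt] ψ) :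
    ∫⁻ ω, ψ ω * φ ω ∂condMixture hm μ ν w = ∫⁻ ω, ψ ω * ∑' n, w n ω * f n ω ∂μ := by
  have hwψf : ∀ n, Measurable[mt] fun ω => w n ω * ψ ω * f n ω := fun n =>
    ((hw n).mul hψ).mul (hf n).1
  rw [lintegral_condMixture hνμ hw (g := fun ω => ψ ω * φ ω) ((hψ.mono hm le_rfl).mul hφ)]
  calc ∑' n, ∫⁻ ω, w n ω / ((ν n).trim hm).rnDeriv (μ.trim hm) ω * (ψ ω * φ ω) ∂ν n
      = ∑' n, ∫⁻ ω, (((ν n).trim hm).rnDeriv (μ.trim hm) ω)⁻¹ * (w n ω * ψ ω * f n ω) ∂ν n := by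
        refine tsum_congr fun n => ?_
        have hχ : Measurable[mt] fun ω =>
            (((ν n).trim hm).rnDeriv (μ.trim hm) ω)⁻¹ * (w n ω * ψ ω) :=
          (Measure.measurable_rnDeriv _ _).inv.mul ((hw n).mul hψ)
        have := (hf n).lintegral_mul hm hφ hχ
        simp only [mul_assoc] at this
        simp only [div_eq_mul_inv, mul_assoc]
        convert this using 3; ring
    _ = ∑' n, ∫⁻ ω, w n ω * ψ ω * f n ω ∂μ :=
        tsum_congr fun n => lintegral_inv_trim_rnDeriv_mul hm (hνμ n) (hμν n) (hwψf n)
    _ = ∫⁻ ω, ψ ω * ∑' n, w n ω * f n ω ∂μ := by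
        rw [← lintegral_tsum fun n => ((hwψf n).mono hm le_rfl).aemeasurable]
        refine lintegral_congr fun ω => ?_
        rw [← ENNReal.tsum_mul_left]
        exact tsum_congr fun n => by ring

theorem lintegral_condMixture_of_measurable (hνμ : ∀ n, ν n ≪ μ) (hμν : ∀ n, μ ≪ ν n)
    (hw : ∀ n, Measurable[mt] (w n)) (hw1 : ∀ᵐ ω ∂μ, ∑' n, w n ω = 1) {φ : Ω → ℝ≥0∞}
    (hφ : Measurable[mt] φ) :
    ∫⁻ ω, φ ω ∂condMixture hm μ ν w = ∫⁻ ω, φ ω ∂μ := by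
  have h := lintegral_mul_condMixture (hm := hm) hνμ hμν hw measurable_const
    (fun n => ⟨measurable_const, fun _ _ => rfl⟩) hφ (f := fun _ _ => 1)
  simp only [mul_one] at h
  rw [h]
  refine lintegral_congr_ae ?_
  filter_upwards [hw1] with ω hω
  rw [hω, mul_one]

theorem isCondExpNN_condMixture (hνμ : ∀ n, ν n ≪ μ) (hμν : ∀ n, μ ≪ ν n)
    (hw : ∀ n, Measurable[mt] (w n)) (hw1 : ∀ᵐ ω ∂μ, ∑' n, w n ω = 1) {φ : Ω → ℝ≥0∞}
    {f : ℕ → Ω → ℝ≥0∞} (hφ : Measurable φ) (hf : ∀ n, IsCondExpNN (ν n) mt φ (f n)) :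
    IsCondExpNN (condMixture hm μ ν w) mt φ fun ω => ∑' n, w n ω * f n ω := by
  have hg : Measurable[mt] fun ω => ∑' n, w n ω * f n ω := by
    let _ := mt
    exact Measurable.tsum fun n => (hw n).mul (hf n).1
  refine ⟨hg, fun A hA => ?_⟩
  have hA1 : Measurable[mt] (A.indicator (1 : Ω → ℝ≥0∞)) := measurable_const.indicator hA
  rw [setLIntegral_eq_lintegral_indicator_one_mul (hm A hA),
    setLIntegral_eq_lintegral_indicator_one_mul (hm A hA),
    lintegral_mul_condMixture hνμ hμν hw hφ hf hA1,
    lintegral_condMixture_of_measurable hνμ hμν hw hw1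
      (φ := fun ω => A.indicator 1 ω * ∑' n, w n ω * f n ω) (hA1.mul hg)]

theorem IsCondExpNN.condMixture_of_le {m₁ : MeasurableSpace Ω} (hm₁ : m₁ ≤ m) (hmt : mt ≤ m₁)
    (hνμ : ∀ n, ν n ≪ μ) (hw : ∀ n, Measurable[mt] (w n)) {φ f : Ω → ℝ≥0∞}
    (hφ : Measurable[m] φ) (hf : ∀ n, IsCondExpNN (ν n) m₁ φ f) :
    IsCondExpNN (condMixture hm μ ν w) m₁ φ f := by
  refine ⟨(hf 0).1, fun A hA => ?_⟩
  have hA1 : Measurable[m₁] (A.indicator (1 : Ω → ℝ≥0∞)) := measurable_const.indicator hA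
  have hfm : Measurable[m] f := (hf 0).1.mono hm₁ le_rfl
  have hA1' : Measurable[m] (A.indicator (1 : Ω → ℝ≥0∞)) := hA1.mono hm₁ le_rfl
  rw [setLIntegral_eq_lintegral_indicator_one_mul (hm₁ A hA),
    setLIntegral_eq_lintegral_indicator_one_mul (hm₁ A hA),
    lintegral_condMixture hνμ hw (g := fun ω => A.indicator 1 ω * f ω) (hA1'.mul hfm),
    lintegral_condMixture hνμ hw (g := fun ω => A.indicator 1 ω * φ ω) (hA1'.mul hφ)]
  refine tsum_congr fun n => ?_
  have hχ : Measurable[m₁] fun ω =>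
      w n ω / ((ν n).trim hm).rnDeriv (μ.trim hm) ω * A.indicator 1 ω :=
    (((hw n).div (Measure.measurable_rnDeriv _ _)).mono hmt le_rfl).mul hA1
  simpa only [mul_assoc] using ((hf n).lintegral_mul hm₁ hφ hχ).symm

theorem IsCondExpNN.condMixture_of_ge {m₁ : MeasurableSpace Ω} (hm₁ : m₁ ≤ mt)
    (hνμ : ∀ n, ν n ≪ μ) (hμν : ∀ n, μ ≪ ν n) (hw : ∀ n, Measurable[mt] (w n))
    (hw1 : ∀ᵐ ω ∂μ, ∑' n, w n ω = 1) {φ f : Ω → ℝ≥0∞} (hφ : Measurable[mt] φ)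
    (h : IsCondExpNN μ m₁ φ f) :
    IsCondExpNN (condMixture hm μ ν w) m₁ φ f := by
  refine ⟨h.1, fun A hA => ?_⟩
  have hAt : MeasurableSet[mt] A := hm₁ A hA
  rw [← lintegral_indicator (hm A hAt), ← lintegral_indicator (hm A hAt),
    lintegral_condMixture_of_measurable hνμ hμν hw hw1 ((h.1.mono hm₁ le_rfl).indicator hAt),
    lintegral_condMixture_of_measurable hνμ hμν hw hw1 (hφ.indicator hAt),
    lintegral_indicator (hm A hAt), lintegral_indicator (hm A hAt), h.2 A hA]

theorem absolutelyContinuous_condMixture (hμν : ∀ n, μ ≪ ν n)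
    (hw : ∀ n, Measurable[mt] (w n)) (hw1 : ∀ᵐ ω ∂μ, ∑' n, w n ω = 1) :
    μ ≪ condMixture hm μ ν w := by
  have hc : ∀ n, Measurable fun ω =>
      w n ω / ((ν n).trim hm).rnDeriv (μ.trim hm) ω * (ν n).rnDeriv μ ω := fun n =>
    (((hw n).div (Measure.measurable_rnDeriv _ _)).mono hm le_rfl).mul
      (Measure.measurable_rnDeriv _ _)
  refine withDensity_absolutelyContinuous' (Measurable.tsum hc).aemeasurable ?_
  have hD : ∀ n, ∀ᵐ ω ∂μ, (ν n).rnDeriv μ ω ≠ 0 := fun n =>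
    (Measure.rnDeriv_pos' (hμν n)).mono fun _ h => h.ne'
  have he : ∀ n, ∀ᵐ ω ∂μ, ((ν n).trim hm).rnDeriv (μ.trim hm) ω ≠ ∞ := fun n =>
    ae_of_ae_trim hm (Measure.rnDeriv_ne_top _ _)
  filter_upwards [hw1, ae_all_iff.2 hD, ae_all_iff.2 he] with ω h1 hD he hzero
  obtain ⟨n, hn⟩ : ∃ n, w n ω ≠ 0 := by
    by_contra! h
    simp [h] at h1
  simpa [hn, hD n, he n] using ENNReal.tsum_eq_zero.1 hzero n

theorem isProbabilityMeasure_condMixture [IsProbabilityMeasure μ] (hνμ : ∀ n, ν n ≪ μ)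
    (hμν : ∀ n, μ ≪ ν n) (hw : ∀ n, Measurable[mt] (w n)) (hw1 : ∀ᵐ ω ∂μ, ∑' n, w n ω = 1) :
    IsProbabilityMeasure (condMixture hm μ ν w) :=
  ⟨by simpa using
    lintegral_condMixture_of_measurable hνμ hμν hw hw1 (φ := fun _ => 1) measurable_const⟩

end CondMixture

section EquivalentMartingaleMeasure

variable {mt m : MeasurableSpace Ω} {Q : Measure Ω}

theorem isCondExpNN_ofReal_iff_condExp_ae_eq [IsFiniteMeasure Q] (hm : mt ≤ m) {g h : Ω → ℝ}
    (hg : Integrable g Q) (hh : Integrable h Q) (hg0 : 0 ≤ᵐ[Q] g) (hh0 : 0 ≤ᵐ[Q] h)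
    (hhm : Measurable[mt] h) :
    IsCondExpNN Q mt (fun ω => ENNReal.ofReal (g ω)) (fun ω => ENNReal.ofReal (h ω)) ↔
      Q[g|mt] =ᵐ[Q] h := by
  have hset : ∀ A, (∫⁻ ω in A, ENNReal.ofReal (h ω) ∂Q = ∫⁻ ω in A, ENNReal.ofReal (g ω) ∂Q ↔
      ∫ ω in A, h ω ∂Q = ∫ ω in A, g ω ∂Q) := by
    intro A
    rw [← ofReal_integral_eq_lintegral_ofReal hh.restrict (ae_restrict_of_ae hh0),
      ← ofReal_integral_eq_lintegral_ofReal hg.restrict (ae_restrict_of_ae hg0)]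
    exact ENNReal.ofReal_eq_ofReal_iff (integral_nonneg_of_ae (ae_restrict_of_ae hh0))
      (integral_nonneg_of_ae (ae_restrict_of_ae hg0))
  constructor
  · intro hc
    exact (ae_eq_condExp_of_forall_setIntegral_eq hm hg (fun _ _ _ => hh.integrableOn)
      (fun A hA _ => (hset A).1 (hc.2 A hA)) hhm.stronglyMeasurable.aestronglyMeasurable).symm
  · intro hce
    refine ⟨ENNReal.measurable_ofReal.comp hhm, fun A hA => (hset A).2 ?_⟩
    rw [← setIntegral_condExp hm hg hA]
    exact setIntegral_congr_ae (hm A hA) (hce.mono fun ω h _ => h.symm)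

variable {d T : ℕ} {F : Filtration ℕ m} {P : Measure Ω} {X : ℕ → Ω → Fin d → ℝ}

theorem IsEMM.isCondExpNN_succ (hQ : IsEMM P Q F X T) (hX : ∀ t, Measurable[F t] (X t))
    (hXpos : ∀ t i, ∀ᵐ ω ∂P, 0 ≤ X t ω i) {s : ℕ} (hs : s < T) (i : Fin d) :
    IsCondExpNN Q (F s) (fun ω => ENNReal.ofReal (X (s + 1) ω i))
      (fun ω => ENNReal.ofReal (X s ω i)) := by
  obtain ⟨hprob, hPQ, hint, hmart⟩ := hQ
  have hQP : Q ≪ P := fun A h => (hPQ A).1 h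
  exact (isCondExpNN_ofReal_iff_condExp_ae_eq (F.le s) (hint _ hs i) (hint _ hs.le i)
    (hQP.ae_le (hXpos _ i)) (hQP.ae_le (hXpos _ i)) ((measurable_pi_apply i).comp (hX s))).2
    (hmart s hs i)

theorem isEMM_of_isCondExpNN [IsProbabilityMeasure Q] (hX : ∀ t, Measurable[F t] (X t))
    (hXpos : ∀ t i, ∀ᵐ ω ∂P, 0 ≤ X t ω i) (hPQ : ∀ A, P A = 0 ↔ Q A = 0)
    (hX0 : ∀ i, ∫⁻ ω, ENNReal.ofReal (X 0 ω i) ∂Q ≠ ∞)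
    (hmart : ∀ s < T, ∀ i, IsCondExpNN Q (F s) (fun ω => ENNReal.ofReal (X (s + 1) ω i))
      (fun ω => ENNReal.ofReal (X s ω i))) :
    IsEMM P Q F X T := by
  have hQP : Q ≪ P := fun A h => (hPQ A).1 h
  have hnn : ∀ u i, 0 ≤ᵐ[Q] fun ω => X u ω i := fun u i => hQP.ae_le (hXpos u i)
  have hlin : ∀ u ≤ T, ∀ i,
      ∫⁻ ω, ENNReal.ofReal (X u ω i) ∂Q = ∫⁻ ω, ENNReal.ofReal (X 0 ω i) ∂Q := by
    intro u hu i
    induction u with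
    | zero => rfl
    | succ u ih => rw [← (hmart u hu i).lintegral_eq, ih (by omega)]
  have hint : ∀ u ≤ T, ∀ i, Integrable (fun ω => X u ω i) Q := fun u hu i =>
    (lintegral_ofReal_ne_top_iff_integrable
      ((measurable_pi_apply i).comp ((hX u).mono (F.le u) le_rfl)).aestronglyMeasurable
      (hnn u i)).1 (hlin u hu i ▸ hX0 i)
  refine ⟨inferInstance, hPQ, hint, fun s hs i => ?_⟩
  exact (isCondExpNN_ofReal_iff_condExp_ae_eq (F.le s) (hint _ hs i) (hint _ hs.le i)
    (hnn _ i) (hnn _ i) ((measurable_pi_apply i).comp (hX s))).1 (hmart s hs i)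

end EquivalentMartingaleMeasure

theorem conditional_prices_countably_convex_general
    {m : MeasurableSpace Ω} {d T : ℕ} (F : Filtration ℕ m)
    (P : Measure Ω)
    (X : ℕ → Ω → Fin d → ℝ) (hX : ∀ t, Measurable[F t] (X t))
    (hXpos : ∀ t i, ∀ᵐ ω ∂P, 0 ≤ X t ω i)
    (t : ℕ)
    (H : Ω → ℝ≥0∞) (hH : Measurable H)
    (Q : ℕ → Measure Ω) (hQ : ∀ n, IsEMM P (Q n) F X T)
    (f : ℕ → Ω → ℝ≥0∞) (hf : ∀ n, IsCondExpNN (Q n) (F t) H (f n))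
    (lam : ℕ → Ω → ℝ≥0∞) (hlamm : ∀ n, Measurable[F t] (lam n))
    (hlam1 : ∀ᵐ ω ∂P, ∑' n, lam n ω = 1) :
    ∃ (Q' : Measure Ω) (g : Ω → ℝ≥0∞),
      IsEMM P Q' F X T ∧ IsCondExpNN Q' (F t) H g ∧
      (fun ω => ∑' n, lam n ω * f n ω) =ᵐ[P] g := by
  have hprob := fun n => (hQ n).1
  have hQP : ∀ n, Q n ≪ P := fun n A h => ((hQ n).2.1 A).1 h
  have hPQ : ∀ n, P ≪ Q n := fun n A h => ((hQ n).2.1 A).2 h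
  have hνμ : ∀ n, Q n ≪ Q 0 := fun n => (hQP n).trans (hPQ 0)
  have hμν : ∀ n, Q 0 ≪ Q n := fun n => (hQP 0).trans (hPQ n)
  have hlam1' : ∀ᵐ ω ∂Q 0, ∑' n, lam n ω = 1 := (hQP 0).ae_le hlam1
  -- Any `Q n` could fix the law of `Q'` on `F t`.
  set Q' := condMixture (F.le t) (Q 0) Q lam
  have : IsProbabilityMeasure Q' := isProbabilityMeasure_condMixture hνμ hμν hlamm hlam1'
  have hPQ' : ∀ A, P A = 0 ↔ Q' A = 0 := fun A =>
    ⟨fun h => condMixture_absolutelyContinuous.trans (hQP 0) h,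
      fun h => (hPQ 0).trans (absolutelyContinuous_condMixture hμν hlamm hlam1') h⟩
  have hXm : ∀ u i, Measurable[F u] fun ω => ENNReal.ofReal (X u ω i) := fun u i =>
    ENNReal.measurable_ofReal.comp ((measurable_pi_apply i).comp (hX u))
  have hX0 : ∀ i, ∫⁻ ω, ENNReal.ofReal (X 0 ω i) ∂Q' ≠ ∞ := fun i => by
    rw [lintegral_condMixture_of_measurable hνμ hμν hlamm hlam1'
      ((hXm 0 i).mono (F.mono (Nat.zero_le t)) le_rfl)]
    exact ((hQ 0).2.2.1 0 (Nat.zero_le T) i).lintegral_lt_top.ne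
  have hmart : ∀ s < T, ∀ i, IsCondExpNN Q' (F s) (fun ω => ENNReal.ofReal (X (s + 1) ω i))
      (fun ω => ENNReal.ofReal (X s ω i)) := by
    intro s hs i
    rcases le_or_gt t s with hts | hst
    · exact IsCondExpNN.condMixture_of_le (F.le s) (F.mono hts) hνμ hlamm
        ((hXm (s + 1) i).mono (F.le _) le_rfl)
        fun n => (hQ n).isCondExpNN_succ hX hXpos hs i
    · exact ((hQ 0).isCondExpNN_succ hX hXpos hs i).condMixture_of_ge (F.mono hst.le) hνμ hμν
        hlamm hlam1' ((hXm (s + 1) i).mono (F.mono hst) le_rfl)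
  exact ⟨Q', _, isEMM_of_isCondExpNN hX hXpos hPQ' hX0 hmart,
    isCondExpNN_condMixture hνμ hμν hlamm hlam1' hH hf, Filter.EventuallyEq.rfl⟩

/-- For every `t` and every claim `H ∈ L^0_+(F_T)`, the set
`{E_Q[H|F_t] : Q ∈ M_e}` is `F_t`-countably convex: for `(Qⁿ) ⊆ M_e` and
`F_t`-measurable weights `λⁿ ≥ 0` with `∑ λⁿ = 1` a.s., there is `Q ∈ M_e` whose
conditional expectation of `H` equals `∑ λⁿ E_{Qⁿ}[H | F_t]` a.s. -/
theorem conditional_prices_countably_convex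
    {m : MeasurableSpace Ω} {d T : ℕ} (F : Filtration ℕ m)
    (P : Measure Ω) [IsProbabilityMeasure P]
    (X : ℕ → Ω → Fin d → ℝ) (hX : ∀ t, Measurable[F t] (X t))
    (hFT : (F T : MeasurableSpace Ω) = m)
    (hF0 : ∀ s : Set Ω, MeasurableSet[F 0] s → P s = 0 ∨ P s = 1)
    (hXpos : ∀ t i, ∀ᵐ ω ∂P, 0 ≤ X t ω i)
    (hNA : ∃ Q : Measure Ω, IsEMM P Q F X T)
    (t : ℕ) (ht : t ≤ T)
    (H : Ω → ℝ≥0∞) (hH : Measurable H)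
    (Q : ℕ → Measure Ω) (hQ : ∀ n, IsEMM P (Q n) F X T)
    (f : ℕ → Ω → ℝ≥0∞) (hf : ∀ n, IsCondExpNN (Q n) (F t) H (f n))
    (lam : ℕ → Ω → ℝ≥0∞) (hlamm : ∀ n, Measurable[F t] (lam n))
    (hlam1 : ∀ᵐ ω ∂P, ∑' n, lam n ω = 1) :
    ∃ (Q' : Measure Ω) (g : Ω → ℝ≥0∞),
      IsEMM P Q' F X T ∧ IsCondExpNN Q' (F t) H g ∧
      (fun ω => ∑' n, lam n ω * f n ω) =ᵐ[P] g :=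
  conditional_prices_countably_convex_general F P X hX hXpos t H hH Q hQ f hf lam hlamm hlam1
end
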